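/- arXiv:math/0510046 — 6 statements merged into one kernel-verified Lean document; each statement's English description precedes it below -/
import Mathlib

section
/- The measure λ(x) dx is invariant under every nonlinear shift θ_t: for every t ∈ ℝ and all a ≤ b one has ∫_{θ_t(a)}^{θ_t(b)} λ(u) du = ∫_a^b λ(u) du. Equivalently, the pushforward of the measure with density λ with respect to Lebesgue measure under the map θ_t equals that measure itself. -/
open Filter MeasureTheory intervalIntegral

/-- The measure `lam(x) dx` is invariant under every nonlinear shift `θ_t`:
for every `t ∈ ℝ` and all `a ≤ b` one has
`∫_{θ_t a}^{θ_t b} lam(u) du = ∫_a^b lam(u) du`.  Equivalently, the pushforward of the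
measure with density `lam` with respect to Lebesgue measure under `θ_t` equals that
measure itself. -/
theorem nonlinear_shift_measure_invariant
    (lam : ℝ → ℝ) (hcont : Continuous lam) (hpos : ∀ x : ℝ, 0 < lam x)
    (hdiv_neg : Tendsto (fun T : ℝ => ∫ u in (-T)..(0 : ℝ), lam u) atTop atTop)
    (hdiv_pos : Tendsto (fun T : ℝ => ∫ u in (0 : ℝ)..T, lam u) atTop atTop)
    (θ : ℝ → ℝ → ℝ) (hθ : ∀ t x : ℝ, (∫ u in x..(θ t x), lam u) = t) :
    (∀ t a b : ℝ, a ≤ b →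
      (∫ u in (θ t a)..(θ t b), lam u) = ∫ u in a..b, lam u) ∧
    (∀ t : ℝ,
      Measure.map (θ t) (volume.withDensity fun x : ℝ => ENNReal.ofReal (lam x)) =
        volume.withDensity fun x : ℝ => ENNReal.ofReal (lam x)) := by
  have hint : ∀ a b : ℝ, IntervalIntegrable lam volume a b := fun a b =>
    hcont.intervalIntegrable a b
  -- Part 1 (without the hypothesis a ≤ b)
  have part1 : ∀ t a b : ℝ, (∫ u in (θ t a)..(θ t b), lam u) = ∫ u in a..b, lam u := by
    intro t a b
    have h1 : (∫ u in a..b, lam u) + ∫ u in b..(θ t b), lam u = ∫ u in a..(θ t b), lam u :=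
      integral_add_adjacent_intervals (hint a b) (hint b (θ t b))
    have h2 : (∫ u in a..(θ t a), lam u) + ∫ u in (θ t a)..(θ t b), lam u
        = ∫ u in a..(θ t b), lam u :=
      integral_add_adjacent_intervals (hint a (θ t a)) (hint (θ t a) (θ t b))
    have ha := hθ t a
    have hb := hθ t b
    linarith
  -- positivity of interval integrals
  have hposint : ∀ {a b : ℝ}, a < b → 0 < ∫ u in a..b, lam u := fun {a b} hab =>
    intervalIntegral_pos_of_pos (hint a b) hpos hab
  -- an integral being zero forces equal endpoints
  have hzero : ∀ {a b : ℝ}, (∫ u in a..b, lam u) = 0 → a = b := by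
    intro a b h
    rcases lt_trichotomy a b with hlt | he | hgt
    · exact absurd h (ne_of_gt (hposint hlt))
    · exact he
    · have := hposint hgt
      have hs : (∫ u in a..b, lam u) = -∫ u in b..a, lam u :=
        intervalIntegral.integral_symm b a
      linarith
  -- strict monotonicity of θ t
  have hmono : ∀ t : ℝ, StrictMono (θ t) := by
    intro t a b hab
    have h := part1 t a b
    by_contra hle
    push_neg at hle
    rcases eq_or_lt_of_le hle with he | hlt
    · rw [he] at h
      simp only [intervalIntegral.integral_same] at h
      exact absurd h.symm (ne_of_gt (hposint hab))
    · have h1 := hposint hlt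
      have hs : (∫ u in θ t a..θ t b, lam u) = -∫ u in θ t b..θ t a, lam u :=
        intervalIntegral.integral_symm _ _
      have h2 := hposint hab
      linarith
  -- θ (-t) is inverse of θ t
  have hinv : ∀ t x : ℝ, θ t (θ (-t) x) = x := by
    intro t x
    have h1 : (∫ u in x..(θ (-t) x), lam u) + ∫ u in (θ (-t) x)..(θ t (θ (-t) x)), lam u
        = ∫ u in x..(θ t (θ (-t) x)), lam u :=
      integral_add_adjacent_intervals (hint _ _) (hint _ _)
    have ha := hθ (-t) x
    have hb := hθ t (θ (-t) x)
    have hz : (∫ u in x..(θ t (θ (-t) x)), lam u) = 0 := by linarith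
    exact (hzero hz).symm
  have hsurj : ∀ t : ℝ, Function.Surjective (θ t) := fun t x => ⟨θ (-t) x, hinv t x⟩
  refine ⟨fun t a b _ => part1 t a b, fun t => ?_⟩
  set μ := volume.withDensity fun x : ℝ => ENNReal.ofReal (lam x) with hμ
  have hcontθ : Continuous (θ t) := by
    have := (StrictMono.orderIsoOfSurjective (θ t) (hmono t) (hsurj t)).toHomeomorph.continuous
    exact this
  have hmeas : Measurable (θ t) := hcontθ.measurable
  -- value of μ on Ioc
  have hval : ∀ a b : ℝ, a ≤ b → μ (Set.Ioc a b) = ENNReal.ofReal (∫ u in a..b, lam u) := by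
    intro a b hab
    rw [hμ, withDensity_apply _ measurableSet_Ioc]
    rw [intervalIntegral.integral_of_le hab]
    rw [ofReal_integral_eq_lintegral_ofReal (hcont.integrableOn_Ioc)
      (Filter.Eventually.of_forall fun x => (hpos x).le)]
  -- preimage of Ioc under θ t
  have hpre : ∀ a b : ℝ, (θ t) ⁻¹' Set.Ioc a b = Set.Ioc (θ (-t) a) (θ (-t) b) := by
    intro a b
    ext x
    simp only [Set.mem_preimage, Set.mem_Ioc]
    constructor
    · rintro ⟨h1, h2⟩
      constructor
      · have := (hmono (-t)) h1
        rwa [show θ (-t) (θ t x) = x by simpa [neg_neg] using hinv (-t) x] at this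
      · have := ((hmono (-t)).le_iff_le).2 h2
        rwa [show θ (-t) (θ t x) = x by simpa [neg_neg] using hinv (-t) x] at this
    · rintro ⟨h1, h2⟩
      constructor
      · have := (hmono t) h1
        rwa [hinv t a] at this
      · have := ((hmono t).le_iff_le).2 h2
        rwa [hinv t b] at this
    -- done
  refine MeasureTheory.Measure.ext_of_Ioc' _ _ ?_ ?_
  · intro a b hab
    rw [Measure.map_apply hmeas measurableSet_Ioc, hpre,
      hval _ _ ((hmono (-t)).le_iff_le.2 hab.le)]
    exact ENNReal.ofReal_ne_top
  · intro a b hab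
    rw [Measure.map_apply hmeas measurableSet_Ioc, hpre,
      hval _ _ ((hmono (-t)).le_iff_le.2 hab.le), hval _ _ hab.le]
    have hp := part1 t (θ (-t) a) (θ (-t) b)
    rw [hinv t a, hinv t b] at hp
    rw [hp]
end

section
/- Finiteness of exit moments (Loynes-type): let z : ℤ → ℝ be strictly increasing and η : ℤ → ℝ satisfy η_i > 0 for all i. Assume the no-overload condition: z_{-k} + Σ_{i=-k}^{-1} η_i → −∞ as k → +∞. Then for every j ∈ ℤ the exit moment y_j := sup_{k ≤ j} (z_k + Σ_{i=k}^{j} η_i) is finite, and the supremum is attained: there exists k ≤ j with y_j = z_k + Σ_{i=k}^{j} η_i. -/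
open Filter

private lemma sum_Icc_split (η : ℤ → ℝ) {a b c : ℤ} (h1 : a ≤ b + 1) (h2 : b ≤ c) :
    ∑ i ∈ Finset.Icc a c, η i = ∑ i ∈ Finset.Icc a b, η i + ∑ i ∈ Finset.Icc (b+1) c, η i := by
  rw [← Finset.sum_union]
  · congr 1
    ext x
    simp only [Finset.mem_union, Finset.mem_Icc]
    omega
  · rw [Finset.disjoint_left]
    intro x hx hx'
    simp only [Finset.mem_Icc] at hx hx'
    omega

/-- **finiteness of exit moments, Loynes-type.** Let `z : ℤ → ℝ` be strictly
increasing and `η : ℤ → ℝ` satisfy `η i > 0` for all `i`.  Assume the no-overload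
condition: `z (-k) + ∑_{i=-k}^{-1} η i → −∞` as `k → +∞`.  Then for every `j ∈ ℤ` the exit
moment `y j := sup_{k ≤ j} (z k + ∑_{i=k}^{j} η i)` is finite and the supremum is attained:
there exists `k ≤ j` with `y j = z k + ∑_{i=k}^{j} η i` (formalized as: the value at some
`k ≤ j` is the greatest element of the set of all such values). -/
theorem exit_moments_finite_attained
    (z : ℤ → ℝ) (hz : StrictMono z)
    (η : ℤ → ℝ) (hη : ∀ i : ℤ, 0 < η i)
    (hno : Tendsto (fun k : ℕ => z (-(k : ℤ)) + ∑ i ∈ Finset.Icc (-(k : ℤ)) (-1), η i)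
      atTop atBot) :
    ∀ j : ℤ, ∃ k ≤ j,
      IsGreatest {v : ℝ | ∃ k' ≤ j, v = z k' + ∑ i ∈ Finset.Icc k' j, η i}
        (z k + ∑ i ∈ Finset.Icc k j, η i) := by
  intro j
  set f : ℤ → ℝ := fun k => z k + ∑ i ∈ Finset.Icc k j, η i with hf
  set C : ℝ := (∑ i ∈ Finset.Icc 0 j, η i) - (∑ i ∈ Finset.Icc (j+1) (-1), η i) with hC
  have hsplit : ∀ k : ℤ, k ≤ j → k ≤ -1 →
      f k = (z k + ∑ i ∈ Finset.Icc k (-1), η i) + C := by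
    intro k hkj hk1
    rcases le_or_gt 0 j with hj | hj
    · have he : Finset.Icc (j+1) (-1 : ℤ) = ∅ := Finset.Icc_eq_empty (by omega)
      have := sum_Icc_split η (a := k) (b := -1) (c := j) (by omega) (by omega)
      simp only [hf, hC, he, Finset.sum_empty]
      rw [this]
      ring_nf
    · have he : Finset.Icc (0 : ℤ) j = ∅ := Finset.Icc_eq_empty (by omega)
      have := sum_Icc_split η (a := k) (b := j) (c := -1) (by omega) (by omega)
      simp only [hf, hC, he, Finset.sum_empty]
      rw [this]
      ring_nf
  -- choose a threshold from the no-overload condition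
  have hev : ∀ᶠ n : ℕ in atTop,
      z (-(n : ℤ)) + ∑ i ∈ Finset.Icc (-(n : ℤ)) (-1), η i ≤ f j - C - 1 :=
    hno.eventually (eventually_le_atBot _)
  obtain ⟨N, hN⟩ := eventually_atTop.mp hev
  set M : ℕ := max N (max 1 (-j).toNat) with hM
  have hM1 : (1 : ℤ) ≤ (M : ℤ) := by
    have : (1 : ℕ) ≤ M := le_trans (le_max_left _ _) (le_max_right _ _)
    exact_mod_cast this
  have hMj : -(M : ℤ) ≤ j := by
    have : ((-j).toNat : ℤ) ≤ (M : ℤ) := by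
      exact_mod_cast le_trans (le_max_right _ _) (le_max_right _ _)
    omega
  have hjT : j ∈ Finset.Icc (-(M : ℤ)) j := Finset.mem_Icc.mpr ⟨hMj, le_refl j⟩
  obtain ⟨k, hkT, hk⟩ := Finset.exists_max_image (Finset.Icc (-(M : ℤ)) j) f ⟨j, hjT⟩
  have hkj : k ≤ j := (Finset.mem_Icc.mp hkT).2
  refine ⟨k, hkj, ⟨k, hkj, rfl⟩, ?_⟩
  rintro v ⟨k', hk', rfl⟩
  show f k' ≤ f k
  rcases le_or_gt (-(M : ℤ)) k' with h | h
  · exact hk k' (Finset.mem_Icc.mpr ⟨h, hk'⟩)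
  · set n : ℕ := (-k').toNat with hn
    have hnk : -(n : ℤ) = k' := by omega
    have hnN : N ≤ n := by
      have h1 : (M : ℤ) < (n : ℤ) := by omega
      have h2 : M < n := by exact_mod_cast h1
      exact le_trans (le_max_left _ _) h2.le
    have hbound := hN n hnN
    rw [hnk] at hbound
    have heq : f k' = (z k' + ∑ i ∈ Finset.Icc k' (-1), η i) + C :=
      hsplit k' hk' (by omega)
    have : f k' ≤ f j - 1 := by rw [heq]; linarith
    have hjk : f j ≤ f k := hk j hjT
    linarith
end

section
/- Stabilization of the conflict resolution iteration: let z : ℤ → ℝ be strictly increasing, η : ℤ → ℝ with η_i > 0 for all i, and assume the no-overload condition z_{-k} + Σ_{i=-k}^{-1} η_i → −∞ as k → +∞. Define recursively w^{(0)}_j := z_j and w^{(n+1)}_j := max(z_j, w^{(n)}_{j-1} + η_{j-1}) for j ∈ ℤ, n ≥ 0. Then for each j the sequence (w^{(n)}_j)_{n ≥ 0} is nondecreasing in n and stabilizes at some finite n: there exists n₀ = n₀(j) such that w^{(n)}_j = w^{(n₀)}_j for all n ≥ n₀, and the limiting value equals max(z_j, y_{j-1}), the moment at which the service of customer j begins,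 where y_{j-1} := sup_{k ≤ j-1} (z_k + Σ_{i=k}^{j-1} η_i). -/
open Filter

lemma my_sum_split (f : ℤ → ℝ) (a b c : ℤ) (h1 : a ≤ b + 1) (h2 : b ≤ c) :
    ∑ i ∈ Finset.Icc a c, f i
      = ∑ i ∈ Finset.Icc a b, f i + ∑ i ∈ Finset.Icc (b+1) c, f i := by
  have hu : Finset.Icc a b ∪ Finset.Icc (b+1) c = Finset.Icc a c := by
    ext x; simp only [Finset.mem_union, Finset.mem_Icc]; omega
  rw [← hu, Finset.sum_union]
  rw [Finset.disjoint_left]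
  intro x hx hx'
  simp only [Finset.mem_Icc] at hx hx'
  omega

lemma my_sum_top (f : ℤ → ℝ) (a b : ℤ) (h : a ≤ b) :
    ∑ i ∈ Finset.Icc a b, f i = ∑ i ∈ Finset.Icc a (b-1), f i + f b := by
  have := my_sum_split f a (b-1) b (by omega) (by omega)
  rw [this]
  norm_num

lemma my_rep (z η : ℤ → ℝ) (w : ℕ → ℤ → ℝ)
    (hw0 : ∀ j : ℤ, w 0 j = z j)
    (hwsucc : ∀ (n : ℕ) (j : ℤ), w (n + 1) j = max (z j) (w n (j - 1) + η (j - 1))) :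
    ∀ (n : ℕ) (j : ℤ), w n j = (Finset.Icc (j - (n:ℤ)) j).sup'
      (Finset.nonempty_Icc.mpr (by omega)) (fun k => z k + ∑ i ∈ Finset.Icc k (j-1), η i) := by
  intro n
  induction n with
  | zero =>
    intro j
    simp only [Nat.cast_zero, sub_zero, Finset.Icc_self, Finset.sup'_singleton]
    rw [hw0, Finset.Icc_eq_empty (by omega), Finset.sum_empty, add_zero]
  | succ n ih =>
    intro j
    rw [hwsucc, ih, Finset.sup'_add]
    have hne : (Finset.Icc (j - 1 - (n:ℤ)) (j-1)).Nonempty := Finset.nonempty_Icc.mpr (by omega)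
    have h1 : (Finset.Icc (j - 1 - (n:ℤ)) (j-1)).sup' hne
          (fun k => (z k + ∑ i ∈ Finset.Icc k (j - 1 - 1), η i) + η (j-1))
        = (Finset.Icc (j - 1 - (n:ℤ)) (j-1)).sup' hne
          (fun k => z k + ∑ i ∈ Finset.Icc k (j-1), η i) := by
      apply Finset.sup'_congr _ rfl
      intro k hk
      have hk2 : k ≤ j - 1 := (Finset.mem_Icc.mp hk).2
      rw [my_sum_top η k (j-1) hk2]
      ring
    rw [h1]
    have h2 : Finset.Icc (j - ((n:ℕ)+1:ℕ)) j = insert j (Finset.Icc (j - 1 - (n:ℤ)) (j - 1)) := by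
      ext x; simp only [Finset.mem_Icc, Finset.mem_insert]; push_cast; omega
    have h3 : (Finset.Icc (j - ((n:ℕ)+1:ℕ)) j).sup'
          (Finset.nonempty_Icc.mpr (by omega))
          (fun k => z k + ∑ i ∈ Finset.Icc k (j-1), η i)
        = (insert j (Finset.Icc (j - 1 - (n:ℤ)) (j - 1))).sup'
          (Finset.insert_nonempty _ _)
          (fun k => z k + ∑ i ∈ Finset.Icc k (j-1), η i) :=
      Finset.sup'_congr _ h2 (fun _ _ => rfl)
    rw [h3, Finset.sup'_insert]
    rw [Finset.Icc_eq_empty (show ¬ (j ≤ j - 1) by omega), Finset.sum_empty, add_zero]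

/-- **stabilization of the conflict resolution iteration.** Let `z : ℤ → ℝ`
be strictly increasing, `η : ℤ → ℝ` with `η i > 0` for all `i`, and assume the no-overload
condition `z (-k) + ∑_{i=-k}^{-1} η i → −∞` as `k → +∞`.  Define recursively
`w 0 j := z j` and `w (n+1) j := max (z j) (w n (j-1) + η (j-1))`.  Then for each `j` the
sequence `n ↦ w n j` is nondecreasing in `n` and stabilizes at some finite `n`: there
exists `n₀ = n₀(j)` with `w n j = w n₀ j` for all `n ≥ n₀`, and the limiting value equals
`max (z j) (y (j-1))`, the moment at which the service of customer `j` begins, where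
`y (j-1) := sup_{k ≤ j-1} (z k + ∑_{i=k}^{j-1} η i)` (characterized as a least upper
bound). -/
theorem conflict_resolution_stabilizes
    (z : ℤ → ℝ) (hz : StrictMono z)
    (η : ℤ → ℝ) (hη : ∀ i : ℤ, 0 < η i)
    (hno : Tendsto (fun k : ℕ => z (-(k : ℤ)) + ∑ i ∈ Finset.Icc (-(k : ℤ)) (-1), η i)
      atTop atBot)
    (w : ℕ → ℤ → ℝ)
    (hw0 : ∀ j : ℤ, w 0 j = z j)
    (hwsucc : ∀ (n : ℕ) (j : ℤ), w (n + 1) j = max (z j) (w n (j - 1) + η (j - 1)))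
    (y : ℤ → ℝ)
    (hy : ∀ j : ℤ, IsLUB {v : ℝ | ∃ k ≤ j, v = z k + ∑ i ∈ Finset.Icc k j, η i} (y j)) :
    ∀ j : ℤ, (Monotone fun n : ℕ => w n j) ∧
      ∃ n₀ : ℕ, (∀ n ≥ n₀, w n j = w n₀ j) ∧ w n₀ j = max (z j) (y (j - 1)) := by
  have rep := my_rep z η w hw0 hwsucc
  intro j
  set g : ℤ → ℝ := fun k => z k + ∑ i ∈ Finset.Icc k (j-1), η i with hg
  -- monotonicity
  have hmono : Monotone fun n : ℕ => w n j := by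
    apply monotone_nat_of_le_succ
    intro n
    rw [rep n j, rep (n+1) j]
    apply Finset.sup'_mono
    apply Finset.Icc_subset_Icc_left
    push_cast; omega
  refine ⟨hmono, ?_⟩
  -- constant relating g to the no-overload sums
  set c : ℝ := ∑ i ∈ Finset.Icc 0 (j-1), η i - ∑ i ∈ Finset.Icc j (-1), η i with hc
  have hgc : ∀ m : ℤ, m ≤ j → m ≤ 0 →
      g m = (z m + ∑ i ∈ Finset.Icc m (-1), η i) + c := by
    intro m hmj hm0
    rcases le_or_gt j 0 with hj | hj
    · have h1 : ∑ i ∈ Finset.Icc m (-1), η i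
          = ∑ i ∈ Finset.Icc m (j-1), η i + ∑ i ∈ Finset.Icc j (-1), η i := by
        have := my_sum_split η m (j-1) (-1) (by omega) (by omega)
        simpa using this
      have h2 : (Finset.Icc (0:ℤ) (j-1)) = ∅ := Finset.Icc_eq_empty (by omega)
      simp only [hg, hc, h1, h2, Finset.sum_empty]
      ring
    · have h1 : ∑ i ∈ Finset.Icc m (j-1), η i
          = ∑ i ∈ Finset.Icc m (-1), η i + ∑ i ∈ Finset.Icc 0 (j-1), η i := by
        have := my_sum_split η m (-1) (j-1) (by omega) (by omega)
        simpa using this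
      have h2 : (Finset.Icc j (-1:ℤ)) = ∅ := Finset.Icc_eq_empty (by omega)
      simp only [hg, hc, h1, h2, Finset.sum_empty]
      ring
  -- the tail of g is bounded by g (j-1)
  have hev := hno.eventually (eventually_le_atBot (g (j-1) - c))
  rw [eventually_atTop] at hev
  obtain ⟨K, hK⟩ := hev
  set B : ℤ := min (min j 0) (-(K:ℤ)) with hB
  have htail : ∀ m : ℤ, m ≤ B → g m ≤ g (j-1) := by
    intro m hm
    have hm0 : m ≤ 0 := by omega
    have hmj : m ≤ j := by omega
    have hmK : m ≤ -(K:ℤ) := by omega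
    have hnat : -((m.natAbs : ℕ) : ℤ) = m := by omega
    have hge : K ≤ m.natAbs := by omega
    have := hK m.natAbs hge
    rw [hnat] at this
    rw [hgc m hmj hm0]
    linarith
  -- choose n₀
  set n₀ : ℕ := (j - B).toNat + 1 with hn₀
  have hn₀B : j - (n₀:ℤ) ≤ B := by
    have := Int.self_le_toNat (j - B)
    push_cast [hn₀]
    omega
  have hn₀1 : (1:ℤ) ≤ (n₀:ℤ) := by push_cast [hn₀]; omega
  have hjm1mem : (j - 1 : ℤ) ∈ Finset.Icc (j - (n₀:ℤ)) j := Finset.mem_Icc.mpr ⟨by omega, by omega⟩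
  refine ⟨n₀, ?_, ?_⟩
  · -- stabilization
    intro n hn
    refine le_antisymm ?_ (hmono hn)
    rw [rep n j, rep n₀ j]
    apply Finset.sup'_le
    intro k hk
    rw [Finset.mem_Icc] at hk
    rcases le_or_gt (j - (n₀:ℤ)) k with h | h
    · exact Finset.le_sup' g (Finset.mem_Icc.mpr ⟨h, hk.2⟩)
    · exact (htail k (by omega)).trans (Finset.le_sup' g hjm1mem)
  · -- limit value
    rw [rep n₀ j]
    have h2 : Finset.Icc (j - (n₀:ℤ)) j = insert j (Finset.Icc (j - (n₀:ℤ)) (j - 1)) := by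
      ext x; simp only [Finset.mem_Icc, Finset.mem_insert]; omega
    have hne' : (Finset.Icc (j - (n₀:ℤ)) (j-1)).Nonempty := Finset.nonempty_Icc.mpr (by omega)
    have h3 : (Finset.Icc (j - (n₀:ℤ)) j).sup' (Finset.nonempty_Icc.mpr (by omega)) g
        = (insert j (Finset.Icc (j - (n₀:ℤ)) (j - 1))).sup' (Finset.insert_nonempty _ _) g :=
      Finset.sup'_congr _ h2 (fun _ _ => rfl)
    rw [h3, Finset.sup'_insert]
    have hgj : g j = z j := by
      simp only [hg]
      rw [Finset.Icc_eq_empty (by omega), Finset.sum_empty, add_zero]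
    have hlub : IsLUB {v : ℝ | ∃ k ≤ j - 1, v = z k + ∑ i ∈ Finset.Icc k (j-1), η i}
        ((Finset.Icc (j - (n₀:ℤ)) (j-1)).sup' hne' g) := by
      constructor
      · rintro v ⟨k, hk, rfl⟩
        rcases le_or_gt (j - (n₀:ℤ)) k with h | h
        · exact Finset.le_sup' g (Finset.mem_Icc.mpr ⟨h, hk⟩)
        · exact (htail k (by omega)).trans
            (Finset.le_sup' g (Finset.mem_Icc.mpr ⟨by omega, by omega⟩))
      · intro b hb
        apply Finset.sup'_le
        intro k hk
        exact hb ⟨k, (Finset.mem_Icc.mp hk).2, rfl⟩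
    have hy' := (hy (j-1)).unique hlub
    rw [hgj, hy']
end

section
/- Preservation of the no-overload condition under backward nonlinear shifts: let λ : ℝ → ℝ be continuous and positive with divergent improper integrals ∫_{-∞}^0 λ and ∫_0^∞ λ, and let θ_t denote the associated nonlinear shift. Let z : ℤ → ℝ be strictly increasing and η : ℤ → ℝ with η_i > 0 for all i, satisfying the no-overload condition z_{-k} + Σ_{i=-k}^{-1} η_i → −∞ as k → +∞. Then for every t ≥ 0 the backward-shifted arrival sequence also satisfies it: θ_{-t}(z_{-k}) + Σ_{i=-k}^{-1} η_i → −∞ as k → +∞. -/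
open Filter MeasureTheory intervalIntegral

/-- **preservation of the no-overload condition under backward nonlinear
shifts.** Let `lam : ℝ → ℝ` be continuous and positive with divergent improper integrals
at `±∞`, and let `θ` denote the associated nonlinear shift (`θ t x` is the unique `y` with
`∫_x^y lam = t`).  Let `z : ℤ → ℝ` be strictly increasing and `η : ℤ → ℝ` with `η i > 0`
for all `i`, satisfying the no-overload condition `z (-k) + ∑_{i=-k}^{-1} η i → −∞`.
Then for every `t ≥ 0` the backward-shifted arrival sequence also satisfies it:
`θ (-t) (z (-k)) + ∑_{i=-k}^{-1} η i → −∞` as `k → +∞`. -/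
theorem no_overload_backward_shift
    (lam : ℝ → ℝ) (hcont : Continuous lam) (hpos : ∀ x : ℝ, 0 < lam x)
    (hdiv_neg : Tendsto (fun T : ℝ => ∫ u in (-T)..(0 : ℝ), lam u) atTop atTop)
    (hdiv_pos : Tendsto (fun T : ℝ => ∫ u in (0 : ℝ)..T, lam u) atTop atTop)
    (θ : ℝ → ℝ → ℝ) (hθ : ∀ t x : ℝ, (∫ u in x..(θ t x), lam u) = t)
    (z : ℤ → ℝ) (hz : StrictMono z)
    (η : ℤ → ℝ) (hη : ∀ i : ℤ, 0 < η i)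
    (hno : Tendsto (fun k : ℕ => z (-(k : ℤ)) + ∑ i ∈ Finset.Icc (-(k : ℤ)) (-1), η i)
      atTop atBot) :
    ∀ t : ℝ, 0 ≤ t →
      Tendsto (fun k : ℕ => θ (-t) (z (-(k : ℤ))) + ∑ i ∈ Finset.Icc (-(k : ℤ)) (-1), η i)
        atTop atBot := by
  intro t ht
  have hle : ∀ x : ℝ, θ (-t) x ≤ x := by
    intro x
    by_contra h
    push_neg at h
    have hpos' : 0 < ∫ u in x..(θ (-t) x), lam u :=
      intervalIntegral.intervalIntegral_pos_of_pos (hcont.intervalIntegrable _ _) hpos h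
    rw [hθ] at hpos'
    linarith
  refine tendsto_atBot_mono (fun k => ?_) hno
  exact add_le_add (hle _) le_rfl
end

section
/- Linear escape of arrival moments under subcritical rate: let λ : ℝ → ℝ be continuous with λ(x) > 0 for all x, and set ℓ := limsup_{T→∞} (1/T) ∫_{-T}^{0} λ(u) du; assume 0 < ℓ < 1. Let (z_{-k})_{k ≥ 1} be a sequence with z_{-k} ≤ 0 for all k such that (1/k) ∫_{z_{-k}}^{0} λ(u) du → 1 as k → ∞. Then liminf_{k→∞} (−z_{-k})/k ≥ 1/ℓ; in particular liminf_{k→∞} (−z_{-k})/k > 1. -/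
open Filter MeasureTheory intervalIntegral

/-- **linear escape of arrival moments under subcritical rate.** Let
`lam : ℝ → ℝ` be continuous with `lam x > 0` for all `x`, and set
`ℓ := limsup_{T→∞} (1/T) ∫_{-T}^{0} lam(u) du`; assume `0 < ℓ < 1`.  Let `(z k)_{k}`
(representing the arrival points `z_{-k}`) satisfy `z k ≤ 0` for all `k` and
`(1/k) ∫_{z k}^{0} lam(u) du → 1` as `k → ∞`.  Then
`liminf_{k→∞} (−z k)/k ≥ 1/ℓ` (stated as: every `c < 1/ℓ` is eventually a lower bound for
`(−z k)/k`); in particular `liminf_{k→∞} (−z k)/k > 1` (stated as: some `c > 1` is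
eventually a lower bound). -/
theorem linear_escape_subcritical
    (lam : ℝ → ℝ) (hcont : Continuous lam) (hpos : ∀ x : ℝ, 0 < lam x)
    (ℓ : ℝ)
    (hℓ : Filter.limsup (fun T : ℝ => (∫ u in (-T)..(0 : ℝ), lam u) / T) atTop = ℓ)
    (hℓ0 : 0 < ℓ) (hℓ1 : ℓ < 1)
    (z : ℕ → ℝ) (hzle : ∀ k : ℕ, z k ≤ 0)
    (hz : Tendsto (fun k : ℕ => (∫ u in (z k)..(0 : ℝ), lam u) / (k : ℝ)) atTop (nhds 1)) :
    (∀ c : ℝ, c < 1 / ℓ → ∀ᶠ k : ℕ in atTop, c ≤ (-(z k)) / (k : ℝ)) ∧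
    ∃ c : ℝ, 1 < c ∧ ∀ᶠ k : ℕ in atTop, c ≤ (-(z k)) / (k : ℝ) := by
  have key : ∀ c : ℝ, 0 < c → c * ℓ < 1 → ∀ᶠ k : ℕ in atTop, c ≤ (-(z k)) / (k : ℝ) := by
    intro c hc hcl
    set ε := (1 - c * ℓ) / (2 * (c + 1)) with hεdef
    have hεpos : 0 < ε := div_pos (by linarith) (by linarith)
    have hεval : ε * (2 * (c + 1)) = 1 - c * ℓ := by
      rw [hεdef]; field_simp
    have hkey : (ℓ + ε) * c < 1 - ε := by nlinarith
    have hbound : ∀ᶠ T : ℝ in atTop,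
        (∫ u in (-T)..(0 : ℝ), lam u) / T < ℓ + ε := by
      have hbdd : IsBoundedUnder (· ≤ ·) atTop
          (fun T : ℝ => (∫ u in (-T)..(0 : ℝ), lam u) / T) := ?_
      · exact eventually_lt_of_limsup_lt (by rw [hℓ]; linarith) hbdd
      by_contra h
      have hemp : {a : ℝ | ∀ᶠ T : ℝ in atTop,
          (∫ u in (-T)..(0 : ℝ), lam u) / T ≤ a} = ∅ := by
        ext a
        simp only [Set.mem_setOf_eq, Set.mem_empty_iff_false, iff_false]
        intro ha
        exact h ⟨a, eventually_map.2 ha⟩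
      have hls := hℓ
      rw [limsup_eq, hemp, Real.sInf_empty] at hls
      linarith
    obtain ⟨T0, hT0⟩ := eventually_atTop.1 hbound
    have hzk : ∀ᶠ k : ℕ in atTop,
        1 - ε < (∫ u in (z k)..(0 : ℝ), lam u) / (k : ℝ) :=
      hz.eventually (eventually_gt_nhds (by linarith))
    have hck : ∀ᶠ k : ℕ in atTop, T0 ≤ c * (k : ℝ) :=
      (Tendsto.const_mul_atTop hc tendsto_natCast_atTop_atTop).eventually_ge_atTop T0
    filter_upwards [hzk, hck, eventually_ge_atTop 1] with k h1 h2 h3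
    by_contra hlt
    push_neg at hlt
    have hkpos : (0 : ℝ) < (k : ℝ) := by exact_mod_cast h3
    have hzk' : -(z k) < c * k := by rwa [div_lt_iff₀ hkpos] at hlt
    have hzgt : -(c * k) ≤ z k := by linarith
    have hint : (∫ u in (z k)..(0 : ℝ), lam u) ≤ ∫ u in (-(c * k))..(0 : ℝ), lam u :=
      intervalIntegral.integral_mono_interval hzgt (hzle k) le_rfl
        (Filter.Eventually.of_forall fun u => (hpos u).le)
        (hcont.intervalIntegrable _ _)
    have hckpos : (0 : ℝ) < c * k := mul_pos hc hkpos
    have h4 : (∫ u in (-(c * k))..(0 : ℝ), lam u) < (ℓ + ε) * (c * k) := by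
      have := hT0 (c * k) h2
      rwa [div_lt_iff₀ hckpos] at this
    have h5 : (1 - ε) * k < ∫ u in (z k)..(0 : ℝ), lam u := by
      rwa [lt_div_iff₀ hkpos] at h1
    nlinarith
  have h1ℓ : 1 < 1 / ℓ := by rw [lt_div_iff₀ hℓ0]; linarith
  constructor
  · intro c hc
    rcases lt_or_ge 0 c with h | h
    · exact key c h ((lt_div_iff₀ hℓ0).1 hc)
    · filter_upwards [eventually_ge_atTop 1] with k hk
      have : (0 : ℝ) ≤ -(z k) / (k : ℝ) :=
        div_nonneg (neg_nonneg.2 (hzle k)) (Nat.cast_nonneg k)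
      linarith
  · refine ⟨(1 + 1 / ℓ) / 2, by linarith, key _ (by linarith) ?_⟩
    have : ((1 + 1 / ℓ) / 2) * ℓ = (ℓ + 1) / 2 := by field_simp
    rw [this]; linarith
end

section
/- Deterministic no-overload lemma: let λ : ℝ → ℝ be continuous with λ(x) > 0 for all x and ℓ := limsup_{T→∞} (1/T) ∫_{-T}^{0} λ(u) du satisfying 0 < ℓ < 1. Let (z_{-k})_{k ≥ 1} be a sequence with z_{-k} ≤ 0 and (1/k) ∫_{z_{-k}}^{0} λ(u) du → 1 as k → ∞, and let η : ℤ → ℝ satisfy η_i > 0 for all i and (1/k) Σ_{i=-k}^{-1} η_i → 1 as k → ∞. Then Σ_{i=-k}^{-1} η_i + z_{-k} → −∞ as k → ∞; that is, the no-overload condition holds. -/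
open Filter MeasureTheory intervalIntegral

/-- **deterministic no-overload lemma.** Let `lam : ℝ → ℝ` be continuous
with `lam x > 0` for all `x` and `ℓ := limsup_{T→∞} (1/T) ∫_{-T}^{0} lam(u) du` satisfying
`0 < ℓ < 1`.  Let `(z k)_k` (representing the arrival points `z_{-k}`) satisfy `z k ≤ 0`
and `(1/k) ∫_{z k}^{0} lam(u) du → 1` as `k → ∞`, and let `η : ℤ → ℝ` satisfy `η i > 0`
for all `i` and `(1/k) ∑_{i=-k}^{-1} η i → 1` as `k → ∞`.  Then
`∑_{i=-k}^{-1} η i + z k → −∞` as `k → ∞`: the no-overload condition holds. -/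
theorem deterministic_no_overload
    (lam : ℝ → ℝ) (hcont : Continuous lam) (hpos : ∀ x : ℝ, 0 < lam x)
    (ℓ : ℝ)
    (hℓ : Filter.limsup (fun T : ℝ => (∫ u in (-T)..(0 : ℝ), lam u) / T) atTop = ℓ)
    (hℓ0 : 0 < ℓ) (hℓ1 : ℓ < 1)
    (z : ℕ → ℝ) (hzle : ∀ k : ℕ, z k ≤ 0)
    (hz : Tendsto (fun k : ℕ => (∫ u in (z k)..(0 : ℝ), lam u) / (k : ℝ)) atTop (nhds 1))
    (η : ℤ → ℝ) (hη : ∀ i : ℤ, 0 < η i)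
    (hηavg : Tendsto (fun k : ℕ => (∑ i ∈ Finset.Icc (-(k : ℤ)) (-1), η i) / (k : ℝ))
      atTop (nhds 1)) :
    Tendsto (fun k : ℕ => (∑ i ∈ Finset.Icc (-(k : ℤ)) (-1), η i) + z k) atTop atBot := by
  classical
  set f : ℝ → ℝ := fun T => (∫ u in (-T)..(0 : ℝ), lam u) / T with hf
  set α : ℝ := (ℓ + 1) / 2 with hαdef
  have hα0 : 0 < α := by simp only [hαdef]; linarith
  have hα1 : α < 1 := by simp only [hαdef]; linarith
  have hℓα : ℓ < α := by simp only [hαdef]; linarith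
  -- boundedness of f under atTop
  have hbdd : IsBoundedUnder (· ≤ ·) atTop f := by
    by_contra h
    have hempty : {a : ℝ | ∀ᶠ T in atTop, f T ≤ a} = ∅ := by
      ext a
      simp only [Set.mem_setOf_eq, Set.mem_empty_iff_false, iff_false]
      intro ha
      exact h ⟨a, ha⟩
    have : limsup f atTop = 0 := by
      rw [Filter.limsup_eq, hempty, Real.sInf_empty]
    rw [hℓ] at this
    linarith
  have hev : ∀ᶠ T in atTop, f T < α :=
    eventually_lt_of_limsup_lt (by rw [hℓ]; exact hℓα) hbdd
  obtain ⟨T0, hT0⟩ := (eventually_atTop).mp hev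
  -- integrability
  have hint : ∀ a b : ℝ, IntervalIntegrable lam volume a b :=
    fun a b => hcont.intervalIntegrable a b
  -- monotonicity of the integral in the lower endpoint
  have hmono : ∀ a b : ℝ, a ≤ b → b ≤ 0 →
      (∫ u in b..(0:ℝ), lam u) ≤ ∫ u in a..(0:ℝ), lam u := by
    intro a b hab hb0
    have hsplit : (∫ u in a..b, lam u) + (∫ u in b..(0:ℝ), lam u)
        = ∫ u in a..(0:ℝ), lam u :=
      integral_add_adjacent_intervals (hint a b) (hint b 0)
    have hnn : 0 ≤ ∫ u in a..b, lam u :=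
      intervalIntegral.integral_nonneg hab (fun x _ => (hpos x).le)
    linarith
  -- the integral tends to atTop
  have hIntTop : Tendsto (fun k : ℕ => ∫ u in (z k)..(0:ℝ), lam u) atTop atTop := by
    have hk : Tendsto (fun k : ℕ => (k : ℝ)) atTop atTop := tendsto_natCast_atTop_atTop
    have := Tendsto.pos_mul_atTop (by norm_num : (0:ℝ) < 1) hz hk
    refine this.congr' ?_
    filter_upwards [eventually_ge_atTop 1] with k hk1
    have hk0 : (k : ℝ) ≠ 0 := by positivity
    field_simp
  -- z tends to atBot
  have hzbot : Tendsto z atTop atBot := by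
    rw [tendsto_atBot]
    intro M
    set M' : ℝ := min M 0 with hM'
    have hM'0 : M' ≤ 0 := min_le_right _ _
    have hB := hIntTop.eventually_gt_atTop (∫ u in M'..(0:ℝ), lam u)
    filter_upwards [hB] with k hk
    by_contra hcontra
    push_neg at hcontra
    have hM'z : M' ≤ z k := le_trans (min_le_left _ _) hcontra.le
    have := hmono M' (z k) hM'z (hzle k)
    linarith
  -- choose δ
  set δ : ℝ := (1 - α) / (2 * (1 + α)) with hδdef
  have hδ0 : 0 < δ := by
    apply div_pos <;> nlinarith
  have hδ1 : δ < 1 := by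
    rw [hδdef, div_lt_one (by nlinarith)]
    nlinarith
  have hc : (1 + δ) * α < 1 - δ := by
    have h1 : δ * (1 + α) < 1 - α := by
      rw [hδdef, div_mul_eq_mul_div, div_lt_iff₀ (by nlinarith)]
      nlinarith
    nlinarith
  -- eventual bounds
  have hE1 : ∀ᶠ k : ℕ in atTop, z k ≤ -T0 := hzbot.eventually_le_atBot (-T0)
  have hE2 : ∀ᶠ k : ℕ in atTop,
      (∑ i ∈ Finset.Icc (-(k : ℤ)) (-1), η i) / (k : ℝ) < 1 + δ :=
    hηavg.eventually_lt_const (by linarith)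
  have hE3 : ∀ᶠ k : ℕ in atTop,
      1 - δ < (∫ u in (z k)..(0 : ℝ), lam u) / (k : ℝ) :=
    hηavg.eventually_const_lt (by linarith) |>.filter_mono le_rfl |>.mp
      (by filter_upwards [hz.eventually_const_lt (show 1 - δ < 1 by linarith)] with k h _ ; exact h)
  set c : ℝ := (1 - δ) / α - (1 + δ) with hcdef
  have hc0 : 0 < c := by
    rw [hcdef, sub_pos, lt_div_iff₀ hα0]
    linarith
  have hkey : ∀ᶠ k : ℕ in atTop,
      (∑ i ∈ Finset.Icc (-(k : ℤ)) (-1), η i) + z k ≤ -c * (k : ℝ) := by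
    filter_upwards [hE1, hE2, hE3, eventually_ge_atTop 1] with k h1 h2 h3 hk1
    have hk0 : (0:ℝ) < (k : ℝ) := by exact_mod_cast Nat.lt_of_lt_of_le Nat.zero_lt_one hk1
    have hS : (∑ i ∈ Finset.Icc (-(k : ℤ)) (-1), η i) ≤ (1 + δ) * (k : ℝ) := by
      have := (div_lt_iff₀ hk0).mp h2
      linarith
    have hzk : -(z k) ≥ T0 := by linarith
    have hfz := hT0 (-(z k)) hzk
    have hzkpos : 0 < -(z k) := by
      have hTpos : (0:ℝ) < -(z k) := by
        -- -(z k) ≥ T0; also ∫ over [z k, 0] > (1-δ) k > 0 forces z k < 0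
        by_contra hP
        push_neg at hP
        have hz0 : z k = 0 := le_antisymm (hzle k) (by linarith)
        rw [hz0] at h3
        simp at h3
        linarith
      exact hTpos
    have hIz : (∫ u in (z k)..(0:ℝ), lam u) < α * (-(z k)) := by
      have : f (-(z k)) < α := hfz
      rw [hf] at this
      simp only [neg_neg] at this
      exact (div_lt_iff₀ hzkpos).mp this
    have hIlow : (1 - δ) * (k : ℝ) < ∫ u in (z k)..(0:ℝ), lam u :=
      (lt_div_iff₀ hk0).mp h3
    have hzup : z k < -((1 - δ) * (k : ℝ) / α) := by
      have h4 : (1 - δ) * (k : ℝ) < α * (-(z k)) := lt_trans hIlow hIz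
      have h5 : (1 - δ) * (k : ℝ) / α < -(z k) := (div_lt_iff₀' hα0).mpr h4
      linarith
    have : (∑ i ∈ Finset.Icc (-(k : ℤ)) (-1), η i) + z k
        < (1 + δ) * (k : ℝ) - (1 - δ) * (k : ℝ) / α := by linarith
    have heq : (1 + δ) * (k : ℝ) - (1 - δ) * (k : ℝ) / α = -c * (k : ℝ) := by
      rw [hcdef]; field_simp; ring
    linarith [heq ▸ this]
  have hlim : Tendsto (fun k : ℕ => -c * (k : ℝ)) atTop atBot := by
    have hk : Tendsto (fun k : ℕ => (k : ℝ)) atTop atTop := tendsto_natCast_atTop_atTop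
    exact Tendsto.const_mul_atTop_of_neg (by linarith : -c < 0) hk
  exact tendsto_atBot_mono' atTop hkey hlim
end
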